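/- arXiv:1706.06820 — 2 statements merged into one kernel-verified Lean document; each statement's English description precedes it below -/
import Mathlib

section
/- For any finite simple graph G on n vertices, α_ir(G) + γ_ir(Ḡ) ≤ n + 1, where Ḡ is the complement of G. -/
open Finset

variable {V : Type*}

/-- Degree of a vertex. -/
noncomputable def deg [Fintype V] (G : SimpleGraph V) (v : V) : ℕ :=
  Nat.card {w | G.Adj v w}

/-- An irregular independent set: independent, with pairwise distinct degrees. -/
def IsIrrIndep [Fintype V] (G : SimpleGraph V) (A : Finset V) : Prop :=
  (∀ u ∈ A, ∀ v ∈ A, ¬ G.Adj u v) ∧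
  (∀ u ∈ A, ∀ v ∈ A, u ≠ v → deg G u ≠ deg G v)

/-- The irregular independence number. -/
noncomputable def alphaIr [Fintype V] (G : SimpleGraph V) : ℕ :=
  sSup {k | ∃ A : Finset V, IsIrrIndep G A ∧ A.card = k}

/-- A regular independent set: independent, all vertices of equal degree. -/
def IsRegIndep [Fintype V] (G : SimpleGraph V) (A : Finset V) : Prop :=
  (∀ u ∈ A, ∀ v ∈ A, ¬ G.Adj u v) ∧
  (∀ u ∈ A, ∀ v ∈ A, deg G u = deg G v)

/-- The regular independence number. -/
noncomputable def alphaReg [Fintype V] (G : SimpleGraph V) : ℕ :=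
  sSup {k | ∃ A : Finset V, IsRegIndep G A ∧ A.card = k}

/-- The independence number. -/
noncomputable def alphaNum [Fintype V] (G : SimpleGraph V) : ℕ :=
  sSup {k | ∃ A : Finset V, (∀ u ∈ A, ∀ v ∈ A, ¬ G.Adj u v) ∧ A.card = k}

/-- An irregular dominating set: dominating, with the outside vertices having
pairwise distinct numbers of neighbours in the set. -/
def IsIrrDom [Fintype V] (G : SimpleGraph V) (D : Finset V) : Prop :=
  (∀ v ∉ D, ∃ w ∈ D, G.Adj v w) ∧
  (∀ u ∉ D, ∀ v ∉ D, u ≠ v →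
    Nat.card {w | w ∈ D ∧ G.Adj u w} ≠ Nat.card {w | w ∈ D ∧ G.Adj v w})

/-- The irregular domination number. -/
noncomputable def gammaIr [Fintype V] (G : SimpleGraph V) : ℕ :=
  sInf {k | ∃ D : Finset V, IsIrrDom G D ∧ D.card = k}

/-- Minimum degree. -/
noncomputable def minDeg [Fintype V] (G : SimpleGraph V) : ℕ :=
  sInf (Set.range (deg G))

/-- Maximum degree. -/
noncomputable def maxDeg [Fintype V] (G : SimpleGraph V) : ℕ :=
  sSup (Set.range (deg G))

/-- The maximum cut: the maximum number of edges with exactly one endpoint in a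
set `A` of vertices (each crossing edge counted once, as the ordered pair with
first coordinate in `A`). -/
noncomputable def maxCut [Fintype V] (G : SimpleGraph V) : ℕ :=
  sSup {k | ∃ A : Set V, k = Nat.card {p : V × V | p.1 ∈ A ∧ p.2 ∉ A ∧ G.Adj p.1 p.2}}

lemma natCard_setOf [Fintype V] (p : V → Prop) [DecidablePred p] :
    Nat.card {w | p w} = (Finset.univ.filter p).card := by
  rw [Nat.card_eq_fintype_card]
  exact Fintype.card_subtype p

lemma deg_eq_filter [Fintype V] (G : SimpleGraph V) [DecidableRel G.Adj] (u : V) :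
    deg G u = (Finset.univ.filter (fun w => G.Adj u w)).card := by
  rw [deg]; exact natCard_setOf _

lemma alphaIr_attained [Fintype V] (G : SimpleGraph V) :
    ∃ A : Finset V, IsIrrIndep G A ∧ A.card = alphaIr G := by
  have h0 : (0 : ℕ) ∈ {k | ∃ A : Finset V, IsIrrIndep G A ∧ A.card = k} :=
    ⟨∅, ⟨by simp, by simp⟩, rfl⟩
  have hbdd : BddAbove {k | ∃ A : Finset V, IsIrrIndep G A ∧ A.card = k} := by
    refine ⟨Fintype.card V, fun k hk => ?_⟩
    obtain ⟨A, _, rfl⟩ := hk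
    exact Finset.card_le_univ A
  have := Nat.sSup_mem ⟨0, h0⟩ hbdd
  exact this

theorem stmt18 [Fintype V] (G : SimpleGraph V) :
    alphaIr G + gammaIr Gᶜ ≤ Fintype.card V + 1 := by
  classical
  obtain ⟨A, ⟨hind, hdeg⟩, hcard⟩ := alphaIr_attained G
  rcases A.eq_empty_or_nonempty with rfl | ⟨a, ha⟩
  · -- alphaIr = 0
    have h0 : alphaIr G = 0 := by simp [← hcard]
    have hD : IsIrrDom Gᶜ Finset.univ := by
      constructor
      · intro v hv; exact absurd (Finset.mem_univ v) hv
      · intro u hu; exact absurd (Finset.mem_univ u) hu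
    have : gammaIr Gᶜ ≤ Fintype.card V :=
      Nat.sInf_le ⟨Finset.univ, hD, Finset.card_univ⟩
    omega
  · set D : Finset V := insert a (Finset.univ \ A) with hDdef
    have hDcard : D.card = Fintype.card V - A.card + 1 := by
      rw [hDdef, Finset.card_insert_of_notMem (by simp [ha]),
        Finset.card_sdiff_of_subset (Finset.subset_univ A), Finset.card_univ]
    have hnotD : ∀ v, v ∉ D ↔ v ∈ A ∧ v ≠ a := by
      intro v
      constructor
      · intro hv
        constructor
        · by_contra hvA
          exact hv (Finset.mem_insert_of_mem (by simp [hvA]))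
        · rintro rfl; exact hv (Finset.mem_insert_self _ _)
      · rintro ⟨hvA, hva⟩ hv
        rcases Finset.mem_insert.1 hv with rfl | h
        · exact hva rfl
        · simp [hvA] at h
    -- key count identity
    have key : ∀ u, u ∉ D →
        Nat.card {w | w ∈ D ∧ Gᶜ.Adj u w} + (A.card - 2) + deg G u + 1
          = Fintype.card V := by
      intro u hu
      obtain ⟨huA, hua⟩ := (hnotD u).1 hu
      have hcount : Nat.card {w | w ∈ D ∧ Gᶜ.Adj u w}
          = (Finset.univ.filter (fun w => w ∈ D ∧ Gᶜ.Adj u w)).card := natCard_setOf _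
      set N : Finset V := Finset.univ.filter (fun w => Gᶜ.Adj u w) with hN
      have hNsplit : N.card = (Finset.univ.filter (fun w => w ∈ D ∧ Gᶜ.Adj u w)).card
          + ((A.erase a).erase u).card := by
        have : (A.erase a).erase u = Finset.univ.filter (fun w => w ∉ D ∧ Gᶜ.Adj u w) := by
          ext w
          simp only [Finset.mem_erase, Finset.mem_filter, Finset.mem_univ, true_and, hnotD,
            SimpleGraph.compl_adj]
          constructor
          · rintro ⟨hwu, hwa, hwA⟩
            exact ⟨⟨hwA, hwa⟩, ⟨(Ne.symm hwu), hind u huA w hwA⟩⟩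
          · rintro ⟨⟨hwA, hwa⟩, hne, _⟩
            exact ⟨hne.symm, hwa, hwA⟩
        rw [this, ← Finset.card_filter_add_card_filter_not
          (p := fun w => w ∈ D) (s := N)]
        congr 1
        · rw [hN, Finset.filter_filter]
          congr 1; ext w; simp only [Finset.mem_filter]; tauto
        · rw [hN, Finset.filter_filter]
          congr 1; ext w; simp only [Finset.mem_filter]; tauto
      have herase : ((A.erase a).erase u).card = A.card - 2 := by
        rw [Finset.card_erase_of_mem (Finset.mem_erase.2 ⟨hua, huA⟩),
          Finset.card_erase_of_mem ha]
        omega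
      have hNcard : N.card + deg G u + 1 = Fintype.card V := by
        rw [deg_eq_filter, hN]
        have hpart : Finset.univ = (Finset.univ.filter (fun w => Gᶜ.Adj u w))
            ∪ (Finset.univ.filter (fun w => G.Adj u w)) ∪ {u} := by
          ext w
          simp only [Finset.mem_union, Finset.mem_filter, Finset.mem_univ, true_and,
            Finset.mem_singleton, SimpleGraph.compl_adj]
          constructor
          · intro _
            by_cases hw : w = u
            · tauto
            · by_cases hadj : G.Adj u w
              · tauto
              · exact Or.inl (Or.inl ⟨Ne.symm hw, hadj⟩)
          · intro _; trivial
        have hdisj1 : Disjoint (Finset.univ.filter (fun w => Gᶜ.Adj u w))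
            (Finset.univ.filter (fun w => G.Adj u w)) := by
          rw [Finset.disjoint_filter]
          intro w _ h
          simp only [SimpleGraph.compl_adj] at h
          exact h.2
        have hdisj2 : Disjoint ((Finset.univ.filter (fun w => Gᶜ.Adj u w))
            ∪ (Finset.univ.filter (fun w => G.Adj u w))) ({u} : Finset V) := by
          simp only [Finset.disjoint_singleton_right, Finset.mem_union, Finset.mem_filter]
          rintro (⟨_, h⟩ | ⟨_, h⟩)
          · exact (Gᶜ.loopless.irrefl u h)
          · exact (G.loopless.irrefl u h)
        have hcardu : Fintype.card V = (Finset.univ.filter (fun w => Gᶜ.Adj u w)).card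
            + (Finset.univ.filter (fun w => G.Adj u w)).card + 1 := by
          rw [← Finset.card_univ]
          conv_lhs => rw [hpart]
          rw [Finset.card_union_of_disjoint hdisj2, Finset.card_union_of_disjoint hdisj1,
            Finset.card_singleton]
        omega
      rw [hcount, ← herase]
      omega
    have hirr : IsIrrDom Gᶜ D := by
      constructor
      · intro v hv
        obtain ⟨hvA, hva⟩ := (hnotD v).1 hv
        refine ⟨a, Finset.mem_insert_self _ _, ?_⟩
        exact (SimpleGraph.compl_adj _ _ _).2 ⟨hva, hind v hvA a ha⟩
      · intro u hu v hv huv heq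
        have h1 := key u hu
        have h2 := key v hv
        obtain ⟨huA, _⟩ := (hnotD u).1 hu
        obtain ⟨hvA, _⟩ := (hnotD v).1 hv
        have : deg G u = deg G v := by omega
        exact hdeg u huA v hvA huv this
    have hγ : gammaIr Gᶜ ≤ Fintype.card V - A.card + 1 :=
      Nat.sInf_le ⟨D, hirr, hDcard⟩
    have hAle : A.card ≤ Fintype.card V := Finset.card_le_univ A
    omega
end

section
/- For any finite simple graph G on n ≥ 2 vertices, α_ir(G) + α_ir(Ḡ) ≤ n, where Ḡ is the complement of G. -/
open Finset

variable {V : Type*}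

lemma deg_eq_ncard [Fintype V] (G : SimpleGraph V) (v : V) :
    deg G v = ({w | G.Adj v w} : Set V).ncard := by
  rw [deg, Nat.card_coe_set_eq]

lemma deg_add_card_le [Fintype V] (G : SimpleGraph V) (A : Finset V)
    (hind : ∀ u ∈ A, ∀ v ∈ A, ¬ G.Adj u v) {u : V} (hu : u ∈ A) :
    deg G u + A.card ≤ Fintype.card V := by
  classical
  have hdisj : Disjoint ({w | G.Adj u w} : Set V) (↑A : Set V) := by
    rw [Set.disjoint_left]
    intro w hw hwA
    exact hind u hu w hwA hw
  have hN : ({w | G.Adj u w} : Set V).Finite := Set.toFinite _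
  have hAf : ((↑A : Set V)).Finite := Set.toFinite _
  have hun : ({w | G.Adj u w} ∪ ↑A : Set V).ncard =
      ({w | G.Adj u w} : Set V).ncard + (↑A : Set V).ncard :=
    Set.ncard_union_eq hdisj hN hAf
  have hle : ({w | G.Adj u w} ∪ ↑A : Set V).ncard ≤ Fintype.card V := by
    have := Set.ncard_le_ncard (Set.subset_univ ({w | G.Adj u w} ∪ ↑A : Set V)) Set.finite_univ
    rwa [Set.ncard_univ, Nat.card_eq_fintype_card] at this
  rw [deg_eq_ncard, ← Set.ncard_coe_finset A]
  omega

lemma exists_deg_zero [Fintype V] (G : SimpleGraph V) (A : Finset V)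
    (hA : IsIrrIndep G A) (hcard : 2 * A.card = Fintype.card V + 1) :
    ∃ a ∈ A, deg G a = 0 := by
  classical
  have ha1 : 1 ≤ A.card := by omega
  have hsub : A.image (deg G) ⊆ Finset.range A.card := by
    intro d hd
    simp only [Finset.mem_image] at hd
    obtain ⟨u, hu, rfl⟩ := hd
    have := deg_add_card_le G A hA.1 hu
    simp only [Finset.mem_range]
    omega
  have hcardim : (A.image (deg G)).card = A.card := by
    apply Finset.card_image_of_injOn
    intro u hu v hv huv
    by_contra hne
    exact hA.2 u hu v hv hne huv
  have heq : A.image (deg G) = Finset.range A.card := by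
    apply Finset.eq_of_subset_of_card_le hsub
    rw [hcardim, Finset.card_range]
  have h0 : (0 : ℕ) ∈ A.image (deg G) := by
    rw [heq, Finset.mem_range]; omega
  simpa using h0

lemma deg_zero_no_adj [Fintype V] (G : SimpleGraph V) {a : V} (h : deg G a = 0) :
    ∀ w, ¬ G.Adj a w := by
  intro w hw
  have : ({w | G.Adj a w} : Set V).ncard = 0 := by rw [← deg_eq_ncard, h]
  rw [Set.ncard_eq_zero (Set.toFinite _)] at this
  exact absurd hw (by rw [Set.eq_empty_iff_forall_notMem] at this; exact this w)

lemma key_lemma [Fintype V] (G : SimpleGraph V) (hn : 2 ≤ Fintype.card V)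
    (A B : Finset V) (hA : IsIrrIndep G A) (hB : IsIrrIndep Gᶜ B) :
    A.card + B.card ≤ Fintype.card V := by
  classical
  by_contra hcon
  push_neg at hcon
  -- |A ∩ B| ≤ 1
  have hinter : (A ∩ B).card ≤ 1 := by
    apply Finset.card_le_one.2
    intro u hu v hv
    by_contra hne
    rw [Finset.mem_inter] at hu hv
    have h1 : ¬ G.Adj u v := hA.1 u hu.1 v hv.1
    have h2 : ¬ Gᶜ.Adj u v := hB.1 u hu.2 v hv.2
    exact h2 ⟨hne, h1⟩
  have hsum : A.card + B.card = (A ∪ B).card + (A ∩ B).card :=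
    (Finset.card_union_add_card_inter A B).symm
  have hun : (A ∪ B).card ≤ Fintype.card V := Finset.card_le_univ _
  have hplus : A.card + B.card = Fintype.card V + 1 := by omega
  -- 2|A| ≤ n+1 and 2|B| ≤ n+1
  have hAle : 2 * A.card ≤ Fintype.card V + 1 := by
    rcases Finset.eq_empty_or_nonempty A with rfl | ⟨u, hu⟩
    · simp
    · have := deg_add_card_le G A hA.1 hu
      have hinj : (A.image (deg G)).card = A.card := by
        apply Finset.card_image_of_injOn
        intro x hx y hy hxy
        by_contra hne
        exact hA.2 x hx y hy hne hxy
      have hsub : A.image (deg G) ⊆ Finset.range (Fintype.card V - A.card + 1) := by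
        intro d hd
        simp only [Finset.mem_image] at hd
        obtain ⟨x, hx, rfl⟩ := hd
        have := deg_add_card_le G A hA.1 hx
        simp only [Finset.mem_range]; omega
      have := Finset.card_le_card hsub
      rw [hinj, Finset.card_range] at this
      have hAn : A.card ≤ Fintype.card V := Finset.card_le_univ _
      omega
  have hBle : 2 * B.card ≤ Fintype.card V + 1 := by
    rcases Finset.eq_empty_or_nonempty B with rfl | ⟨u, hu⟩
    · simp
    · have hinj : (B.image (deg Gᶜ)).card = B.card := by
        apply Finset.card_image_of_injOn
        intro x hx y hy hxy
        by_contra hne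
        exact hB.2 x hx y hy hne hxy
      have hsub : B.image (deg Gᶜ) ⊆ Finset.range (Fintype.card V - B.card + 1) := by
        intro d hd
        simp only [Finset.mem_image] at hd
        obtain ⟨x, hx, rfl⟩ := hd
        have := deg_add_card_le Gᶜ B hB.1 hx
        simp only [Finset.mem_range]; omega
      have := Finset.card_le_card hsub
      rw [hinj, Finset.card_range] at this
      have hBn : B.card ≤ Fintype.card V := Finset.card_le_univ _
      omega
  have hAeq : 2 * A.card = Fintype.card V + 1 := by omega
  have hBeq : 2 * B.card = Fintype.card V + 1 := by omega
  obtain ⟨a, ha, hdega⟩ := exists_deg_zero G A hA hAeq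
  obtain ⟨b, hb, hdegb⟩ := exists_deg_zero Gᶜ B hB hBeq
  have hano : ∀ w, ¬ G.Adj a w := deg_zero_no_adj G hdega
  have hbno : ∀ w, ¬ Gᶜ.Adj b w := deg_zero_no_adj Gᶜ hdegb
  have hball : ∀ w, w ≠ b → G.Adj b w := by
    intro w hw
    by_contra hnadj
    exact hbno w ⟨fun h => hw h.symm, hnadj⟩
  by_cases hab : a = b
  · subst hab
    obtain ⟨w, hw⟩ := Fintype.exists_ne_of_one_lt_card (by omega) a
    exact hano w (hball w hw)
  · exact hano b ((hball a hab).symm)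

theorem stmt19 [Fintype V] (G : SimpleGraph V) (hn : 2 ≤ Fintype.card V) :
    alphaIr G + alphaIr Gᶜ ≤ Fintype.card V := by
  classical
  have hbdd : ∀ (H : SimpleGraph V),
      BddAbove {k | ∃ A : Finset V, IsIrrIndep H A ∧ A.card = k} := by
    intro H
    refine ⟨Fintype.card V, ?_⟩
    rintro k ⟨A, -, rfl⟩
    exact Finset.card_le_univ _
  have hne : ∀ (H : SimpleGraph V),
      {k | ∃ A : Finset V, IsIrrIndep H A ∧ A.card = k}.Nonempty := by
    intro H
    exact ⟨0, ∅, ⟨by simp, by simp⟩, by simp⟩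
  obtain ⟨A, hA, hAc⟩ := Nat.sSup_mem (hne G) (hbdd G)
  obtain ⟨B, hB, hBc⟩ := Nat.sSup_mem (hne Gᶜ) (hbdd Gᶜ)
  rw [alphaIr, alphaIr, ← hAc, ← hBc]
  exact key_lemma G hn A B hA hB
end
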